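/- arXiv:1902.07856 — 2 statements merged into one kernel-verified Lean document; each statement's English description precedes it below -/
import Mathlib

section
/- For a single-box Pandora's problem modeled as a two-level DAG Markov system (start state s with price π, transitioning to destination states t with probability p_t and value r_t), the grade τ^s of the start state is the unique solution of E[(X − τ)⁺] = π, where X is the random destination value, provided π > 0 and P[X > min_t r_t] > 0. That is, the grade coincides with Weitzman's index. -/
open scoped BigOperators

/-- For a single-box Pandora's problem modeled as a two-level DAG Markov system (start state
`s` with price `π > 0`, transitioning to destination `t` with probability `p t` and value
`r t`), the grade `τ^s = sup {τ : U^s(τ) > 0}`, where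
`U^s(τ) = max (0, −π + E[(X − τ)⁺])`, coincides with Weitzman's index, i.e. it is the
(unique) solution `σ` of `E[(X − σ)⁺] = π`, provided `P[X > min_t r_t] > 0`. -/
theorem grade_eq_weitzman_index
    {T : Type*} [Fintype T] [Nonempty T]
    (p r : T → ℝ) (π : ℝ)
    (hp : ∀ t, 0 ≤ p t) (hsum : ∑ t, p t = 1) (hπ : 0 < π)
    (hspread : 0 < ∑ t, (if (⨅ t' : T, r t') < r t then p t else 0))  -- P[X > min_t r_t] > 0
    (U : ℝ → ℝ)
    (hU : ∀ τ : ℝ, U τ = max 0 (-π + ∑ t, p t * max (r t - τ) 0))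
    (σ : ℝ) (hσ : ∑ t, p t * max (r t - σ) 0 = π)                     -- Weitzman's index
    : sSup {τ : ℝ | 0 < U τ} = σ := by
  set f : ℝ → ℝ := fun τ => ∑ t, p t * max (r t - τ) 0 with hf
  have hfσ : f σ = π := hσ
  have hfmono : ∀ τ₁ τ₂ : ℝ, τ₁ ≤ τ₂ → f τ₂ ≤ f τ₁ := by
    intro τ₁ τ₂ h
    apply Finset.sum_le_sum
    intro t _
    exact mul_le_mul_of_nonneg_left (max_le_max (by linarith) le_rfl) (hp t)
  -- there is a t₀ with p t₀ > 0 and r t₀ > σ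
  obtain ⟨t₀, -, ht₀⟩ : ∃ t ∈ Finset.univ, 0 < p t * max (r t - σ) 0 := by
    by_contra h
    push_neg at h
    have : f σ ≤ 0 := Finset.sum_nonpos (fun t ht => h t ht)
    rw [hfσ] at this
    linarith
  have hpt₀ : 0 < p t₀ := (hp t₀).lt_of_ne fun h => by simp [← h] at ht₀
  have hmax : 0 < max (r t₀ - σ) 0 := by
    by_contra h
    push_neg at h
    have : p t₀ * max (r t₀ - σ) 0 ≤ 0 :=
      mul_nonpos_of_nonneg_of_nonpos (hp t₀) h
    linarith
  have hrσ : σ < r t₀ := by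
    rcases lt_max_iff.mp hmax with h | h
    · linarith
    · linarith
  -- strict: τ < σ → π < f τ
  have hlt : ∀ τ : ℝ, τ < σ → π < f τ := by
    intro τ hτ
    rw [← hfσ]
    apply Finset.sum_lt_sum
    · intro t _
      exact mul_le_mul_of_nonneg_left (max_le_max (by linarith) le_rfl) (hp t)
    · refine ⟨t₀, Finset.mem_univ _, ?_⟩
      have h1 : max (r t₀ - σ) 0 = r t₀ - σ := max_eq_left (by linarith)
      have h2 : max (r t₀ - τ) 0 = r t₀ - τ := max_eq_left (by linarith)
      rw [h1, h2]
      exact mul_lt_mul_of_pos_left (by linarith) hpt₀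
  have hmem : ∀ τ : ℝ, τ < σ → τ ∈ {τ : ℝ | 0 < U τ} := by
    intro τ hτ
    have := hlt τ hτ
    simp only [Set.mem_setOf_eq, hU τ, lt_max_iff]
    right
    show 0 < -π + f τ
    linarith
  have hub : ∀ τ ∈ {τ : ℝ | 0 < U τ}, τ ≤ σ := by
    intro τ hτ
    by_contra h
    push_neg at h
    have hle : f τ ≤ π := hfσ ▸ hfmono σ τ h.le
    have : 0 < max 0 (-π + f τ) := hU τ ▸ hτ
    rcases lt_max_iff.mp this with h' | h'
    · exact lt_irrefl _ h'
    · have : π < f τ := by linarith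
      linarith
  have hbdd : BddAbove {τ : ℝ | 0 < U τ} := ⟨σ, hub⟩
  have hne : {τ : ℝ | 0 < U τ}.Nonempty := ⟨σ - 1, hmem _ (by linarith)⟩
  refine le_antisymm (csSup_le hne hub) ?_
  refine le_of_forall_lt fun c hc => ?_
  have hmid : c < (c + σ) / 2 := by linarith
  have hmid' : (c + σ) / 2 < σ := by linarith
  exact lt_of_lt_of_le hmid (le_csSup hbdd (hmem _ hmid'))
end

section
/- Shifted prevailing cost error bound: fix a Markov system of DAG depth D_i whose estimated grades satisfy |τ̂^u − τ^u| ≤ ε/(4kD_i) for all states u. Define shifted grades along a trajectory of length ≤ D_i by γ̂^u = τ̂^u + d_u·ε/(2kD_i), where d_u ≤ D_i is the step at which u is visited. Then the shifted prevailing cost Ŷ = min_u γ̂^u and the true prevailing cost Y = min_u τ^u satisfy |Ŷ − Y| ≤ ε/(2k). -/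
/-- Shifted prevailing cost error bound: fix a Markov system of DAG depth `D` whose estimated
grades satisfy `|τ̂^u − τ^u| ≤ ε/(4kD)` for all states `u` along a trajectory visiting states
`u_0, …, u_m` with `m ≤ D − 1` (the Markov system is played at most `D` times).  Define the
shifted grades `γ̂^{u_j} = τ̂^{u_j} + j·ε/(2kD)`.  Then the shifted prevailing cost
`Ŷ = min_j γ̂^{u_j}` and the true prevailing cost `Y = min_j τ^{u_j}` satisfy
`|Ŷ − Y| ≤ ε/(2k)`. -/
theorem shifted_prevailing_cost_error
    (k D : ℕ) (hk : 1 ≤ k) (hD : 1 ≤ D)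
    (m : ℕ) (hm : m < D)
    (ε : ℝ) (hε : 0 ≤ ε)
    (τ τh : Fin (m + 1) → ℝ)
    (herr : ∀ j, |τh j - τ j| ≤ ε / (4 * k * D))
    : |(⨅ j : Fin (m + 1), (τh j + (j : ℕ) * ε / (2 * k * D))) -
        ⨅ j : Fin (m + 1), τ j| ≤ ε / (2 * k) := by
  have hkR : (1 : ℝ) ≤ (k : ℕ) := by exact_mod_cast hk
  have hDR : (1 : ℝ) ≤ (D : ℕ) := by exact_mod_cast hD
  have hkpos : (0 : ℝ) < k := by linarith
  have hDpos : (0 : ℝ) < D := by linarith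
  rw [abs_sub_le_iff]
  constructor
  · -- A - B ≤ ε/(2k)
    obtain ⟨j, hj⟩ := exists_eq_ciInf_of_finite (f := τ)
    have h1 : (⨅ i : Fin (m + 1), (τh i + (i : ℕ) * ε / (2 * k * D)))
        ≤ τh j + (j : ℕ) * ε / (2 * k * D) :=
      ciInf_le (Finite.bddBelow_range _) j
    have h2 : τh j ≤ τ j + ε / (4 * k * D) := by
      have := abs_le.mp (herr j); linarith [this.2]
    have hjD : ((j : ℕ) : ℝ) ≤ (D : ℝ) - 1 := by
      have : (j : ℕ) ≤ D - 1 := Nat.le_sub_one_of_lt (lt_of_le_of_lt (Nat.le_of_lt_succ j.isLt) hm)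
      have h' : ((j : ℕ) : ℝ) ≤ ((D - 1 : ℕ) : ℝ) := by exact_mod_cast this
      rwa [Nat.cast_sub hD, Nat.cast_one] at h'
    have h3 : (j : ℕ) * ε / (2 * k * D) ≤ ((D : ℝ) - 1) * ε / (2 * k * D) := by
      apply div_le_div_of_nonneg_right _ (by positivity)
      exact mul_le_mul_of_nonneg_right hjD hε
    have h4 : ε / (4 * k * D) + ((D : ℝ) - 1) * ε / (2 * k * D) ≤ ε / (2 * k) := by
      rw [div_add_div _ _ (by positivity) (by positivity), div_le_div_iff₀ (by positivity) (by positivity)]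
      ring_nf
      nlinarith [mul_pos hkpos hDpos, mul_nonneg hε (mul_pos hkpos hDpos).le]
    linarith [hj ▸ (le_refl (τ j))]
  · -- B - A ≤ ε/(2k)
    obtain ⟨j, hj⟩ := exists_eq_ciInf_of_finite (f := fun i : Fin (m+1) => τh i + (i : ℕ) * ε / (2 * k * D))
    have h1 : (⨅ i : Fin (m + 1), τ i) ≤ τ j := ciInf_le (Finite.bddBelow_range _) j
    have h2 : τ j ≤ τh j + ε / (4 * k * D) := by
      have := abs_le.mp (herr j); linarith [this.1]
    have h3 : (0 : ℝ) ≤ (j : ℕ) * ε / (2 * k * D) := by positivity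
    have h4 : ε / (4 * k * D) ≤ ε / (2 * k) := by
      apply div_le_div_of_nonneg_left hε (by positivity) <;> nlinarith
    linarith [hj.ge]
end
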